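/- Let k₀ ∈ ℝ^d, let U ⊂ ℂ^d be an open ball centered at k₀, and let f : U → ℂ be holomorphic. Assume that f(k) ∈ ℝ for every k ∈ U ∩ ℝ^d, and that f(k₀ + z) = f(k₀ − z) whenever k₀ + z and k₀ − z both lie in U. Then f(k₀ + iβ) ∈ ℝ for every β ∈ ℝ^d with k₀ + iβ ∈ U. -/

import Mathlib

open Metric

/-- The natural embedding of `ℝ^d` as the set of real points of `ℂ^d`. -/
def toCplx {d : ℕ} (v : EuclideanSpace ℝ (Fin d)) : EuclideanSpace ℂ (Fin d) :=
  WithLp.toLp 2 (fun i => (v i : ℂ))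

/-!
Restrict `f` to the complex line `t ↦ k₀ + t β`. The restriction `g` is holomorphic on a
conjugation-invariant convex open set and real on the real axis, so by the identity theorem it
agrees there with `conj ∘ g ∘ conj` (Schwarz reflection). Hence `conj (g i) = g (-i)`, and
`g (-i) = g i` is the evenness of `f` about `k₀`.
-/

open Complex ComplexConjugate Filter Topology

lemma toCplx_add {d : ℕ} (v w : EuclideanSpace ℝ (Fin d)) :
    toCplx (v + w) = toCplx v + toCplx w := by
  ext i; simp [toCplx]

lemma toCplx_smul {d : ℕ} (x : ℝ) (v : EuclideanSpace ℝ (Fin d)) :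
    toCplx (x • v) = (x : ℂ) • toCplx v := by
  ext i; simp [toCplx]

lemma frequently_nhdsNE_ofReal_of_forall {S : Set ℂ} (hS : IsOpen S) {x₀ : ℝ}
    (hx₀ : (x₀ : ℂ) ∈ S) {P : ℂ → Prop} (hP : ∀ x : ℝ, (x : ℂ) ∈ S → P x) :
    ∃ᶠ z in 𝓝[≠] (x₀ : ℂ), P z := by
  have hofReal : Tendsto ofReal (𝓝[≠] x₀) (𝓝[≠] (x₀ : ℂ)) :=
    continuous_ofReal.continuousWithinAt.tendsto_nhdsWithin fun _ hx ↦ by simpa using hx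
  have hmem : ∀ᶠ x : ℝ in 𝓝[≠] x₀, (x : ℂ) ∈ S :=
    mem_nhdsWithin_of_mem_nhds <|
      continuous_ofReal.continuousAt.preimage_mem_nhds (hS.mem_nhds hx₀)
  exact hofReal.frequently (hmem.mono hP).frequently

theorem eqOn_conj_comp_conj_of_im_eq_zero {g : ℂ → ℂ} {S : Set ℂ}
    (hg : DifferentiableOn ℂ g S) (hS : IsOpen S) (hS' : IsPreconnected S)
    (hconj : ∀ z ∈ S, conj z ∈ S) {x₀ : ℝ} (hx₀ : (x₀ : ℂ) ∈ S)
    (hreal : ∀ x : ℝ, (x : ℂ) ∈ S → (g x).im = 0) :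
    Set.EqOn (conj ∘ g ∘ conj) g S := by
  have hg' : DifferentiableOn ℂ (conj ∘ g ∘ conj) S := fun z hz ↦
    (differentiableAt_conj_conj_iff.mpr
      ((hg _ (hconj z hz)).differentiableAt (hS.mem_nhds (hconj z hz)))).differentiableWithinAt
  have hfreq : ∃ᶠ z in 𝓝[≠] (x₀ : ℂ), (conj ∘ g ∘ conj) z = g z := by
    refine frequently_nhdsNE_ofReal_of_forall hS hx₀ fun x hx ↦ ?_
    simpa [conj_ofReal, conj_eq_iff_im] using hreal x hx
  exact (hg'.analyticOnNhd hS).eqOn_of_preconnected_of_frequently_eq (hg.analyticOnNhd hS) hS' hx₀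
    hfreq

theorem stmt_7_general {d : ℕ} (k₀ : EuclideanSpace ℝ (Fin d)) (R : ℝ) (hR : 0 < R)
    (f : EuclideanSpace ℂ (Fin d) → ℂ)
    (hf : DifferentiableOn ℂ f (ball (toCplx k₀) R))
    (hreal : ∀ v : EuclideanSpace ℝ (Fin d),
      toCplx v ∈ ball (toCplx k₀) R → (f (toCplx v)).im = 0)
    (hsymm : ∀ z : EuclideanSpace ℂ (Fin d),
      toCplx k₀ + z ∈ ball (toCplx k₀) R → toCplx k₀ - z ∈ ball (toCplx k₀) R →
      f (toCplx k₀ + z) = f (toCplx k₀ - z)) :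
    ∀ β : EuclideanSpace ℝ (Fin d),
      toCplx k₀ + Complex.I • toCplx β ∈ ball (toCplx k₀) R →
      (f (toCplx k₀ + Complex.I • toCplx β)).im = 0 := by
  intro β hI
  set c := toCplx k₀
  set b := toCplx β
  set S : Set ℂ := {t | c + t • b ∈ ball c R}
  have hS_eq : S = (· • b) ⁻¹' ball 0 R := by ext t; simp [S]
  have hS : IsOpen S := hS_eq ▸ isOpen_ball.preimage (continuous_id.smul continuous_const)
  have hS' : IsPreconnected S := hS_eq ▸
    ((convex_ball (0 : EuclideanSpace ℂ (Fin d)) R).linear_preimage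
      ((LinearMap.toSpanSingleton ℂ _ b).restrictScalars ℝ)).isPreconnected
  have hconj : ∀ t ∈ S, conj t ∈ S := by simp [hS_eq, norm_smul]
  have hg : DifferentiableOn ℂ (fun t : ℂ ↦ f (c + t • b)) S :=
    hf.comp ((differentiable_const c).add (differentiable_id.smul_const b)).differentiableOn
      fun _ ht ↦ ht
  have hg_real : ∀ x : ℝ, (x : ℂ) ∈ S → (f (c + (x : ℂ) • b)).im = 0 := by
    intro x hx
    change c + (x : ℂ) • b ∈ ball c R at hx
    rw [← toCplx_smul, ← toCplx_add] at hx ⊢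
    exact hreal _ hx
  have hreflect : conj (f (c + conj I • b)) = f (c + I • b) :=
    eqOn_conj_comp_conj_of_im_eq_zero hg hS hS' hconj
      (x₀ := 0) (by simpa [S] using hR) hg_real (show I ∈ S from hI)
  have hneg : c - I • b ∈ ball c R := by simpa [S, sub_eq_add_neg] using hconj I hI
  have heven : f (c + conj I • b) = f (c + I • b) := by
    rw [conj_I, neg_smul, ← sub_eq_add_neg, hsymm _ hI hneg]
  rw [heven] at hreflect
  exact conj_eq_iff_im.mp hreflect

/-- if `f` is holomorphic on an open ball `U` centered at `k₀ ∈ ℝ^d ⊂ ℂ^d`,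
real-valued on `U ∩ ℝ^d`, and even with respect to `k₀` (`f(k₀+z) = f(k₀-z)`), then
`f(k₀ + iβ)` is real for every `β ∈ ℝ^d` with `k₀ + iβ ∈ U`. -/
theorem stmt_7 {d : ℕ} (hd : 1 ≤ d) (k₀ : EuclideanSpace ℝ (Fin d)) (R : ℝ) (hR : 0 < R)
    (f : EuclideanSpace ℂ (Fin d) → ℂ)
    (hf : DifferentiableOn ℂ f (ball (toCplx k₀) R))
    (hreal : ∀ v : EuclideanSpace ℝ (Fin d),
      toCplx v ∈ ball (toCplx k₀) R → (f (toCplx v)).im = 0)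
    (hsymm : ∀ z : EuclideanSpace ℂ (Fin d),
      toCplx k₀ + z ∈ ball (toCplx k₀) R → toCplx k₀ - z ∈ ball (toCplx k₀) R →
      f (toCplx k₀ + z) = f (toCplx k₀ - z)) :
    ∀ β : EuclideanSpace ℝ (Fin d),
      toCplx k₀ + Complex.I • toCplx β ∈ ball (toCplx k₀) R →
      (f (toCplx k₀ + Complex.I • toCplx β)).im = 0 :=
  stmt_7_general k₀ R hR f hf hreal hsymm
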